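/- With the normal form spanning set as above (H_i = (e_i + Σ_k X_{ik} f_k, Σ_k α_{ik} e_k^*), V_j = (Σ_k Z_{jk} f_k, f_j^* + Σ_k β_{jk} e_k^*) spanning an isotropic L in V ⊕ V*), the projection D = pr₁(L) ⊆ V has dimension r + rank(Z), where Z = (Z_{jk}) is the s × s skew-symmetric matrix. In particular dim D ≡ r (mod 2). -/
import Mathlib

open Module

noncomputable section

open Matrix RealInnerProductSpace
lemma even_rank_of_skew' {n : ℕ} (A : Matrix (Fin n) (Fin n) ℝ) (hA : Aᵀ = -A) :
    Even A.rank := by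
  let E := EuclideanSpace ℝ (Fin n)
  let f : E →ₗ[ℝ] E := Matrix.toEuclideanLin A
  have hrank : A.rank = finrank ℝ (LinearMap.range f) :=
    A.rank_eq_finrank_range_toLin (PiLp.basisFun 2 ℝ (Fin n)) (PiLp.basisFun 2 ℝ (Fin n))
  have hAH : Aᴴ = -A := by
    rw [← hA]; ext i j; simp [Matrix.conjTranspose_apply, Matrix.transpose_apply]
  have hadj : ∀ x y : E, ⟪f x, y⟫ = -⟪x, f y⟫ := by
    intro x y
    have h1 : (Matrix.toEuclideanLin Aᴴ : E →ₗ[ℝ] E) = LinearMap.adjoint f :=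
      Matrix.toEuclideanLin_conjTranspose_eq_adjoint A
    have h2 : LinearMap.adjoint f = -f := by
      rw [← h1, hAH, map_neg]
    calc ⟪f x, y⟫ = ⟪x, LinearMap.adjoint f y⟫ := (LinearMap.adjoint_inner_right f _ _).symm
      _ = ⟪x, -(f y)⟫ := by rw [h2]; simp
      _ = -⟪x, f y⟫ := by simp
  set U := LinearMap.range f with hUdef
  have hmaps : ∀ x ∈ U, f x ∈ U := fun x _ => LinearMap.mem_range_self f x
  let g : U →ₗ[ℝ] U := f.restrict hmaps
  have hgcoe : ∀ u : U, (g u : E) = f (u : E) := fun u => rfl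
  have hginj : Function.Injective g := by
    rw [← LinearMap.ker_eq_bot, LinearMap.ker_eq_bot']
    intro u hu
    obtain ⟨w, hw⟩ := u.2
    have hfu : f (u : E) = 0 := by rw [← hgcoe u, hu]; rfl
    have hinner : ⟪(u : E), (u : E)⟫ = 0 := by
      conv_lhs => rw [← hw]
      rw [hadj w (f w), hw, hfu, inner_zero_right, neg_zero]
    ext1
    simpa using inner_self_eq_zero.mp hinner
  have hgsurj : Function.Surjective g :=
    (LinearMap.injective_iff_surjective).mp hginj
  let e : U ≃ₗ[ℝ] U := LinearEquiv.ofBijective g ⟨hginj, hgsurj⟩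
  let ob := stdOrthonormalBasis ℝ U
  let B := ob.toBasis
  let M := LinearMap.toMatrix B B g
  have hdet : M.det ≠ 0 := by
    have h := LinearEquiv.isUnit_det e B B
    have : (e : U →ₗ[ℝ] U) = g := rfl
    rw [this] at h
    exact IsUnit.ne_zero h
  have hMval : ∀ i j, M i j = ⟪(ob i : E), f ((ob j : U) : E)⟫ := by
    intro i j
    show (LinearMap.toMatrix B B g) i j = _
    rw [LinearMap.toMatrix_apply]
    have h1 : (B j : U) = ob j := ob.coe_toBasis ▸ rfl
    rw [h1]
    have h2 : B.repr (g (ob j)) i = ⟪ob i, g (ob j)⟫ := by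
      rw [ob.coe_toBasis_repr_apply, ob.repr_apply_apply]
    rw [h2]
    rfl
  have hskewM : Mᵀ = -M := by
    ext i j
    rw [Matrix.transpose_apply, Matrix.neg_apply, hMval, hMval]
    rw [real_inner_comm]
    rw [hadj]
  have hMdet : M.det = (-1 : ℝ) ^ (finrank ℝ U) * M.det := by
    conv_lhs => rw [← Matrix.det_transpose M, hskewM, Matrix.det_neg]
    simp
  rcases Nat.even_or_odd (finrank ℝ U) with he | ho
  · rw [hrank]; exact he
  · exfalso
    rw [ho.neg_one_pow, neg_one_mul] at hMdet
    exact hdet (by linarith)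

/-- The canonical pairing on `V ⊕ V*`. -/
def pairing {W : Type*} [AddCommGroup W] [Module ℝ W]
    (p q : W × Module.Dual ℝ W) : ℝ := (1/2) * (p.2 q.1 + q.2 p.1)

/-- A subspace of `V ⊕ V*` is isotropic if the canonical pairing vanishes on it. -/
def IsIsotropic {W : Type*} [AddCommGroup W] [Module ℝ W]
    (L : Submodule ℝ (W × Module.Dual ℝ W)) : Prop :=
  ∀ p ∈ L, ∀ q ∈ L, pairing p q = 0

theorem stmt14 {r s : ℕ} {V : Type*} [AddCommGroup V] [Module ℝ V] [FiniteDimensional ℝ V]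
    (b : Basis (Fin r ⊕ Fin s) ℝ V)
    (X : Fin r → Fin s → ℝ) (α : Fin r → Fin r → ℝ)
    (Z : Fin s → Fin s → ℝ) (β : Fin s → Fin r → ℝ)
    (H : Fin r → V × Module.Dual ℝ V)
    (Vj : Fin s → V × Module.Dual ℝ V)
    (hH : ∀ i, H i = (b (Sum.inl i) + ∑ k, X i k • b (Sum.inr k),
      ∑ k, α i k • b.coord (Sum.inl k)))
    (hV : ∀ j, Vj j = (∑ k, Z j k • b (Sum.inr k),
      b.coord (Sum.inr j) + ∑ k, β j k • b.coord (Sum.inl k)))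
    (hiso : IsIsotropic (Submodule.span ℝ (Set.range H ∪ Set.range Vj))) :
    finrank ℝ (Submodule.map (LinearMap.fst ℝ V (Module.Dual ℝ V))
        (Submodule.span ℝ (Set.range H ∪ Set.range Vj))) =
      r + (Matrix.of Z).rank ∧
    finrank ℝ (Submodule.map (LinearMap.fst ℝ V (Module.Dual ℝ V))
        (Submodule.span ℝ (Set.range H ∪ Set.range Vj))) % 2 = r % 2 := by
  classical
  set F := LinearMap.fst ℝ V (Module.Dual ℝ V) with hF
  set h : Fin r → V := fun i => b (Sum.inl i) + ∑ k, X i k • b (Sum.inr k) with hh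
  set v : Fin s → V := fun j => ∑ k, Z j k • b (Sum.inr k) with hv
  -- Step B: skewness of Z
  have hskew : ∀ j k, Z k j = -Z j k := by
    intro j k
    have hmem : ∀ j, Vj j ∈ Submodule.span ℝ (Set.range H ∪ Set.range Vj) :=
      fun j => Submodule.subset_span (Or.inr ⟨j, rfl⟩)
    have h := hiso _ (hmem j) _ (hmem k)
    rw [hV j, hV k] at h
    simp only [pairing, LinearMap.add_apply, map_sum, LinearMap.smul_apply, _root_.map_smul,
      Basis.coord_apply, Basis.repr_self, smul_eq_mul, Finsupp.smul_single,
      Finsupp.single_apply, Finset.sum_ite_eq', Finset.mem_univ, if_true] at h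
    simp [Finsupp.single_apply, Finset.sum_ite_eq', LinearMap.coe_sum, Finset.sum_apply,
      Basis.coord_apply, Basis.repr_self] at h
    linarith
  have hZskew : (Matrix.of Z)ᵀ = -(Matrix.of Z) := by
    ext j k
    simpa using hskew j k
  -- Step A: the projection is the sup of two spans
  have hmap : Submodule.map F (Submodule.span ℝ (Set.range H ∪ Set.range Vj)) =
      Submodule.span ℝ (Set.range h) ⊔ Submodule.span ℝ (Set.range v) := by
    rw [Submodule.map_span, Set.image_union, ← Set.range_comp, ← Set.range_comp,
      Submodule.span_union]
    congr 2
    · ext x; constructor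
      · rintro ⟨i, rfl⟩; exact ⟨i, by simp [hF, hH i, hh]⟩
      · rintro ⟨i, rfl⟩; exact ⟨i, by simp [hF, hH i, hh]⟩
    · ext x; constructor
      · rintro ⟨j, rfl⟩; exact ⟨j, by simp [hF, hV j, hv]⟩
      · rintro ⟨j, rfl⟩; exact ⟨j, by simp [hF, hV j, hv]⟩
  -- coordinates of h
  have hcoordh : ∀ i i', b.repr (h i) (Sum.inl i') = if i' = i then 1 else 0 := by
    intro i i'
    simp only [hh, map_add, Finsupp.add_apply, Basis.repr_self, map_sum, _root_.map_smul]
    simp only [Finsupp.single_apply, Finsupp.smul_single, Finset.sum_ite_eq', smul_eq_mul,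
      mul_zero, Finsupp.coe_finset_sum, Finset.sum_apply]
    simp [eq_comm]
  -- Step C: finrank of span of h is r
  have hlih : LinearIndependent ℝ h := by
    let π : V →ₗ[ℝ] (Fin r → ℝ) := LinearMap.pi (fun i => b.coord (Sum.inl i))
    apply LinearIndependent.of_comp π
    have : ⇑π ∘ h = fun i => Pi.single i (1 : ℝ) := by
      funext i; funext i'
      simp [π, Basis.coord_apply, hcoordh, Pi.single_apply]
    rw [this]
    have hbeq : (fun i => Pi.single i (1:ℝ)) = ⇑(Pi.basisFun ℝ (Fin r)) := by
      funext i; simp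
    rw [hbeq]
    exact (Pi.basisFun ℝ (Fin r)).linearIndependent
  have hfr1 : finrank ℝ (Submodule.span ℝ (Set.range h)) = r := by
    rw [finrank_span_eq_card hlih, Fintype.card_fin]
  -- Step D: the two spans intersect trivially
  have hdisj : Submodule.span ℝ (Set.range h) ⊓ Submodule.span ℝ (Set.range v) = ⊥ := by
    rw [eq_bot_iff]
    rintro x ⟨hx1, hx2⟩
    -- x has vanishing inl-coordinates
    have hcoord0 : ∀ i, b.repr x (Sum.inl i) = 0 := by
      intro i
      have hle : Submodule.span ℝ (Set.range v) ≤ LinearMap.ker (b.coord (Sum.inl i)) := by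
        rw [Submodule.span_le]
        rintro _ ⟨j, rfl⟩
        simp [hv, Basis.coord_apply, Finsupp.single_apply]
      simpa [Basis.coord_apply] using hle hx2
    -- the "reconstruction" map
    let φ : V →ₗ[ℝ] V := ∑ i : Fin r, LinearMap.smulRight (b.coord (Sum.inl i)) (h i)
    have hφ : ∀ y ∈ Submodule.span ℝ (Set.range h), φ y = y := by
      intro y hy
      induction hy using Submodule.span_induction with
      | mem y hy =>
        obtain ⟨i, rfl⟩ := hy
        simp [φ, LinearMap.sum_apply, Basis.coord_apply, hcoordh, ite_smul,
          Finset.sum_ite_eq', Finset.mem_univ]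
      | zero => simp
      | add y z _ _ hy hz => simp [map_add, hy, hz]
      | smul c y _ hy => simp [_root_.map_smul, hy]
    have : x = 0 := by
      have := hφ x hx1
      rw [← this]
      simp [φ, LinearMap.sum_apply, Basis.coord_apply, hcoord0]
    simp [this]
  -- Step E: finrank of span of v is rank Z
  have hfr2 : finrank ℝ (Submodule.span ℝ (Set.range v)) = (Matrix.of Z).rank := by
    let ι : (Fin s → ℝ) →ₗ[ℝ] V := (Pi.basisFun ℝ (Fin s)).constr ℝ (fun k => b (Sum.inr k))
    have hι : ∀ c : Fin s → ℝ, ι c = ∑ k, c k • b (Sum.inr k) := by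
      intro c
      rw [Basis.constr_apply_fintype]
      simp
    have hιinj : Function.Injective ι := by
      let σ : V →ₗ[ℝ] (Fin s → ℝ) := LinearMap.pi (fun k => b.coord (Sum.inr k))
      have hlinv : Function.LeftInverse σ ι := by
        intro c; funext k
        simp [σ, hι, Basis.coord_apply, Finsupp.single_apply, Finset.sum_ite_eq']
      exact hlinv.injective
    have hmapv : Submodule.span ℝ (Set.range v) =
        Submodule.map ι (Submodule.span ℝ (Set.range fun j => Z j)) := by
      rw [Submodule.map_span, ← Set.range_comp]
      congr 1
      ext x; constructor
      · rintro ⟨j, rfl⟩; exact ⟨j, by simp [hι, hv]⟩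
      · rintro ⟨j, rfl⟩; exact ⟨j, by simp [hι, hv]⟩
    rw [hmapv, ← LinearEquiv.finrank_eq
      (Submodule.equivMapOfInjective ι hιinj (Submodule.span ℝ (Set.range fun j => Z j)))]
    rw [Matrix.rank_eq_finrank_span_row]
    rfl
  -- Step F: conclude the dimension count
  have hdim : finrank ℝ (Submodule.map F (Submodule.span ℝ (Set.range H ∪ Set.range Vj))) =
      r + (Matrix.of Z).rank := by
    rw [hmap]
    have := Submodule.finrank_sup_add_finrank_inf_eq
      (Submodule.span ℝ (Set.range h)) (Submodule.span ℝ (Set.range v))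
    rw [hdisj, finrank_bot, add_zero, hfr1, hfr2] at this
    exact this
  refine ⟨hdim, ?_⟩
  rw [hdim]
  obtain ⟨m, hm⟩ := even_rank_of_skew' (Matrix.of Z) hZskew
  omega
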